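/- For every b ∈ ℂ and every d ∈ C: au₊(b,d) ⊒ au(b,d); that is, the antagonistic colour-witness update is at least as good as the antagonistic concise classic update with respect to the order ⊒. -/

import Mathlib

open scoped Classical

/-- Membership in `C⁻`, where `C = {lo,…,hi}`: everything of `C` except `hi` when `hi` is odd. -/
def CminusMem (lo hi c : ℕ) : Prop := lo ≤ c ∧ c ≤ hi ∧ (Even hi ∨ c ≠ hi)

/-- A potential witness: a sequence `b = b_k,…,b_0` over `C_⊥ = C⁻ ∪ {⊥}`, with `⊥ = none`. -/
abbrev Wit : Type := ℕ → Option ℕ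

/-- The statespace of the update games: witnesses together with the top element `WON`,
which is represented by `none`. -/
abbrev St : Type := Option Wit

/-- Indices `≤ k` of entries of the witness carrying an even colour. -/
noncomputable def evenIdx (k : ℕ) (b : Wit) : Finset ℕ :=
  (Finset.range (k + 1)).filter fun i => ∃ c, b i = some c ∧ Even c

/-- Indices `≤ k` of entries of the witness carrying an odd colour. -/
noncomputable def oddIdx (k : ℕ) (b : Wit) : Finset ℕ :=
  (Finset.range (k + 1)).filter fun i => ∃ c, b i = some c ∧ Odd c

/-- `evenodd(b)`: the even indices if no entry is odd; otherwise the even indices above the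
largest odd index `o`, together with `o`. -/
noncomputable def evenodd (k : ℕ) (b : Wit) : Finset ℕ :=
  if h : (oddIdx k b).Nonempty then
    ((evenIdx k b).filter fun i => (oddIdx k b).max' h < i) ∪ {(oddIdx k b).max' h}
  else evenIdx k b

/-- The value of a witness: `val(b) = Σ_{i ∈ evenodd(b)} 2^i`. -/
noncomputable def valw (k : ℕ) (b : Wit) : ℕ := ∑ i ∈ evenodd k b, 2 ^ i

/-- The order `⪰` on `C_⊥`: every colour is better than `⊥`, even colours are better than odd
ones, higher even colours are better than lower even ones, and lower odd colours are better
than higher odd ones. -/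
def colGe : Option ℕ → Option ℕ → Prop
  | _, none => True
  | none, some _ => False
  | some a, some b => (Even a ∧ (Odd b ∨ b ≤ a)) ∨ (Odd a ∧ Odd b ∧ a ≤ b)

/-- The lexicographic order `⊒` on sequences of length `k+1`, with the entry of index `k`
most significant, comparing entries by `⪰`. -/
def seqGe (k : ℕ) (a b : Wit) : Prop :=
  (∀ i ≤ k, a i = b i) ∨
  ∃ i ≤ k, (∀ i', i < i' → i' ≤ k → a i' = b i') ∧ colGe (a i) (b i) ∧ a i ≠ b i

/-- The order `⊒` on the statespace, with top element `WON = none`. -/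
def stGe (k : ℕ) : St → St → Prop
  | none, _ => True
  | some _, none => False
  | some a, some b => seqGe k a b

/-- The truncation `↓₁b`: for each odd colour, all occurrences other than the leftmost
(highest-index, among indices `≤ k`) one are replaced by `⊥`. -/
noncomputable def trunc (k : ℕ) (b : Wit) : Wit := fun i =>
  match b i with
  | none => none
  | some o => if Odd o ∧ ∃ i', i < i' ∧ i' ≤ k ∧ b i' = some o then none else some o

/-- The classic raw update `ru'(b,d)` of a witness `b = b_k,…,b_0` over `C_⊥` (with
`C = {lo,…,hi}`) upon reading a vertex of colour `d`. -/
noncomputable def ruC (k hi : ℕ) (b : Wit) (d : ℕ) : Wit :=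
  if Odd d ∧ d = hi then fun _ => none
  else if (Odd d ∧ ∀ i ≤ k, b i = none ∨ ∃ c, b i = some c ∧ d ≤ c)
       ∨ (Even d ∧ ∀ i ≤ k, ∃ c, b i = some c ∧ Even c ∧ d ≤ c) then b
  else if Odd d then
    let j := Nat.findGreatest (fun j' => ∃ c, b j' = some c ∧ c < d) k
    fun i => if j < i then b i else if i = j ∧ j ≠ 0 then some d else none
  else
    let j0 := Nat.findGreatest (fun j' => ∃ c, b j' = some c ∧ c < d) k
    let j1 := if h : ∃ j', j' ≤ k ∧ ¬ ∃ c, b j' = some c ∧ Even c then Nat.find h else 0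
    let j := max j0 j1
    fun i => if j < i then b i else if i = j then some d else none

/-- The update `up(b,d)`: `↓₁ru'(b,d)` if `val(ru'(b,d)) ≤ e`, and `WON` otherwise;
moreover `up(WON,d) = WON`. -/
noncomputable def upC (k hi e : ℕ) : St → ℕ → St
  | none, _ => none
  | some b, d => if valw k (ruC k hi b d) ≤ e then some (trunc k (ruC k hi b d)) else none

/-- The colour-witness raw update `ru₊(b,d)` of a concise witness `b = b_k,…,b_0` over `C_⊥`
(with `C = {lo,…,hi}`) upon reading a vertex of colour `d`. -/
noncomputable def ruP (k hi : ℕ) (b : Wit) (d : ℕ) : Wit :=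
  if Odd d ∧ d = hi then fun _ => none
  else if Odd d ∧ ∀ i ≤ k, b i = none ∨ ∃ c, b i = some c ∧ d < c then b
  else if Odd d then
    let j := Nat.findGreatest (fun j' => ∃ c, b j' = some c ∧ c ≤ d) k
    fun i => if j < i then b i else if i = j ∧ j ≠ 0 then some d else none
  else if ∃ i ≤ k, ∃ c, b i = some c ∧ Odd c ∧ c < d then
    let j := Nat.findGreatest (fun j' => ∃ c, b j' = some c ∧ Odd c ∧ c < d) k
    fun i => if j ≤ i then (if ∃ c, b i = some c ∧ c < d then some d else b i)
             else if i = 0 then some d else none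
  else if h : ∃ i, i ≤ k ∧ ¬ ∃ c, b i = some c ∧ Even c then
    let j := Nat.find h
    fun i => if j < i then (if ∃ c, b i = some c ∧ c ≤ d then some d else b i)
             else if i = j then some d else none
  else fun i => if ∃ c, b i = some c ∧ c ≤ d then some d else b i

/-- The colour-witness update `up₊(b,d)`: `ru₊(b,d)` if `val(ru₊(b,d)) ≤ e`, and `WON`
otherwise; moreover `up₊(WON,d) = WON`. -/
noncomputable def upP (k hi e : ℕ) : St → ℕ → St
  | none, _ => none
  | some b, d => if valw k (ruP k hi b d) ≤ e then some (ruP k hi b d) else none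

/-- Membership in `ℂ`, the set of concise witnesses: sequences over `C_⊥` that are ordered,
concise (each odd colour occurs at most once and `b_0` is not odd) and of value at most `e`. -/
def memC (lo hi e k : ℕ) (b : Wit) : Prop :=
  (∀ i ≤ k, b i = none ∨ ∃ c, b i = some c ∧ CminusMem lo hi c) ∧
  (∀ i j, j < i → i ≤ k → ∀ ci cj, b i = some ci → b j = some cj → cj ≤ ci) ∧
  (∀ o, Odd o → ∀ i j, i ≤ k → j ≤ k → i ≠ j → b i = some o → ¬ b j = some o) ∧
  (∀ c, b 0 = some c → ¬ Odd c) ∧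
  valw k b ≤ e

/-- The state `s` belongs to `ℂ ∪ {WON}`. -/
def memCW (lo hi e k : ℕ) (s : St) : Prop :=
  s = none ∨ ∃ b, s = some b ∧ memC lo hi e k b

/-- The antagonistic update built from an update function `f`:
`min_⊒ { f(c,d) : c ∈ ℂ ∪ {WON}, c ⊒ b }`, with `au(WON,d) = WON`. -/
noncomputable def antag (lo hi e k : ℕ) (f : St → ℕ → St) (s : St) (d : ℕ) : St :=
  match s with
  | none => none
  | some b =>
    if h : ∃ x : St, (∃ c : St, memCW lo hi e k c ∧ stGe k c (some b) ∧ f c d = x) ∧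
        ∀ y : St, (∃ c : St, memCW lo hi e k c ∧ stGe k c (some b) ∧ f c d = y) → stGe k y x
    then h.choose else none

/-- The antagonistic update `au(b,d) = min_⊒ { up(c,d) : c ∈ ℂ ∪ {WON}, c ⊒ b }`. -/
noncomputable def auC (lo hi e k : ℕ) : St → ℕ → St := antag lo hi e k (upC k hi e)

/-- The antagonistic update `au₊(b,d) = min_⊒ { up₊(c,d) : c ∈ ℂ ∪ {WON}, c ⊒ b }`. -/
noncomputable def auP (lo hi e k : ℕ) : St → ℕ → St := antag lo hi e k (upP k hi e)

/-!
On a concise witness `b` the colour-witness update dominates the classic one. For odd `d` the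
two raw updates coincide once the classic one is truncated. For even `d` both keep `b` above a
common pivot and write `d` there; below it the classic update blanks everything, while `ru₊`
writes only even colours. Hence `ru₊(b,d) ⊒ ↓₁ru'(b,d)` and `val(ru'(b,d)) ≤ val(ru₊(b,d))`, so
`up₊(b,d) ⊒ up(b,d)`.

Now `au₊(b,d)` is either `WON` or `up₊(c,d)` for some `c ∈ ℂ ∪ {WON}` with `c ⊒ b`, and
`up₊(c,d) ⊒ up(c,d) ⊒ au(b,d)`. The last step needs the minimum defining `au(b,d)` to exist:
ignoring the entries above index `k`, which `⊒` does not see, there are only finitely many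
classic updates, since their colours are bounded by `max C`.
-/

section Order

lemma colGe_none (x : Option ℕ) : colGe x none := by
  cases x <;> trivial

lemma colGe_refl (x : Option ℕ) : colGe x x := by
  cases x with
  | none => trivial
  | some a => simp only [colGe, Nat.even_iff, Nat.odd_iff]; omega

lemma colGe_total (x y : Option ℕ) : colGe x y ∨ colGe y x := by
  cases x with
  | none => exact Or.inr (colGe_none _)
  | some a =>
    cases y with
    | none => exact Or.inl (colGe_none _)
    | some b => simp only [colGe, Nat.even_iff, Nat.odd_iff]; omega

lemma colGe_antisymm {x y : Option ℕ} (hxy : colGe x y) (hyx : colGe y x) : x = y := by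
  cases x <;> cases y <;>
    simp only [colGe, Nat.even_iff, Nat.odd_iff, Option.some.injEq] at hxy hyx ⊢
  omega

lemma colGe_trans {x y z : Option ℕ} (hxy : colGe x y) (hyz : colGe y z) : colGe x z := by
  cases z with
  | none => exact colGe_none _
  | some c =>
    cases x <;> cases y <;> simp only [colGe, Nat.even_iff, Nat.odd_iff] at hxy hyz ⊢
    omega

lemma exists_greatest_ne {k : ℕ} {a b : Wit} (h : ¬ ∀ i ≤ k, a i = b i) :
    ∃ i ≤ k, a i ≠ b i ∧ ∀ i', i < i' → i' ≤ k → a i' = b i' := by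
  push Not at h
  obtain ⟨i, hik, hne⟩ := h
  refine ⟨Nat.findGreatest (fun j => a j ≠ b j) k, Nat.findGreatest_le k,
    Nat.findGreatest_spec (P := fun j => a j ≠ b j) hik hne, fun i' hlt hle => ?_⟩
  by_contra hne'
  exact Nat.findGreatest_is_greatest hlt hle hne'

lemma seqGe_refl (k : ℕ) (a : Wit) : seqGe k a a := Or.inl fun _ _ => rfl

lemma seqGe_of_eqOn {k : ℕ} {a b : Wit} (h : ∀ i ≤ k, a i = b i) : seqGe k a b := Or.inl h

lemma seqGe_total (k : ℕ) (a b : Wit) : seqGe k a b ∨ seqGe k b a := by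
  by_cases hall : ∀ i ≤ k, a i = b i
  · exact Or.inl (Or.inl hall)
  obtain ⟨i, hik, hne, habove⟩ := exists_greatest_ne hall
  rcases colGe_total (a i) (b i) with h | h
  · exact Or.inl (Or.inr ⟨i, hik, habove, h, hne⟩)
  · exact Or.inr (Or.inr ⟨i, hik, fun i' h1 h2 => (habove i' h1 h2).symm, h, Ne.symm hne⟩)

lemma seqGe_trans {k : ℕ} {a b c : Wit} (hab : seqGe k a b) (hbc : seqGe k b c) :
    seqGe k a c := by
  rcases hab with hab | ⟨i, hik, habove, hcol, hne⟩
  · rcases hbc with hbc | ⟨j, hjk, hbove, hcol', hne'⟩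
    · exact Or.inl fun i hi => (hab i hi).trans (hbc i hi)
    · exact Or.inr ⟨j, hjk, fun i' h1 h2 => (hab i' h2).trans (hbove i' h1 h2),
        hab j hjk ▸ hcol', hab j hjk ▸ hne'⟩
  rcases hbc with hbc | ⟨j, hjk, hbove, hcol', hne'⟩
  · exact Or.inr ⟨i, hik, fun i' h1 h2 => (habove i' h1 h2).trans (hbc i' h2),
      (hbc i hik).symm ▸ hcol, (hbc i hik).symm ▸ hne⟩
  rcases lt_trichotomy i j with hlt | rfl | hgt
  · exact Or.inr ⟨j, hjk, fun i' h1 h2 => (habove i' (by omega) h2).trans (hbove i' h1 h2),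
      (habove j hlt hjk).symm ▸ hcol', (habove j hlt hjk).symm ▸ hne'⟩
  · refine Or.inr ⟨i, hik, fun i' h1 h2 => (habove i' h1 h2).trans (hbove i' h1 h2),
      colGe_trans hcol hcol', fun hac => hne' (colGe_antisymm hcol' ?_)⟩
    rwa [hac] at hcol
  · exact Or.inr ⟨i, hik, fun i' h1 h2 => (habove i' h1 h2).trans (hbove i' (by omega) h2),
      hbove i hgt hik ▸ hcol, hbove i hgt hik ▸ hne⟩

lemma seqGe_of_eqOn_of_eq_none {k p : ℕ} {a b : Wit}
    (hag : ∀ i, p ≤ i → i ≤ k → a i = b i) (hb : ∀ i < p, b i = none) : seqGe k a b := by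
  by_cases hall : ∀ i ≤ k, a i = b i
  · exact Or.inl hall
  obtain ⟨i, hik, hne, habove⟩ := exists_greatest_ne hall
  have hip : i < p := by
    by_contra hc
    exact hne (hag i (by omega) hik)
  exact Or.inr ⟨i, hik, habove, hb i hip ▸ colGe_none _, hne⟩

lemma seqGe_congr {k : ℕ} {a a' b b' : Wit} (ha : ∀ i ≤ k, a i = a' i)
    (hb : ∀ i ≤ k, b i = b' i) (h : seqGe k a b) : seqGe k a' b' :=
  seqGe_trans (seqGe_of_eqOn fun i hi => (ha i hi).symm) (seqGe_trans h (seqGe_of_eqOn hb))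

lemma stGe_refl (k : ℕ) (s : St) : stGe k s s := by
  cases s with
  | none => trivial
  | some a => exact seqGe_refl k a

lemma stGe_trans {k : ℕ} {x y z : St} (hxy : stGe k x y) (hyz : stGe k y z) : stGe k x z := by
  match x, y, z, hxy, hyz with
  | none, _, _, _, _ => trivial
  | some _, some _, some _, hxy, hyz => exact seqGe_trans hxy hyz

lemma stGe_total (k : ℕ) (x y : St) : stGe k x y ∨ stGe k y x := by
  match x, y with
  | none, _ => exact Or.inl trivial
  | some _, none => exact Or.inr trivial
  | some a, some b => exact seqGe_total k a b

end Order

section Minimum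

/-- `⊒` only sees the indices `≤ k`, while a witness is a function on all of `ℕ`. -/
def restrictSt (k : ℕ) : St → St :=
  Option.map fun w i => if i ≤ k then w i else none

lemma stGe_restrictSt_iff {k : ℕ} {x y : St} :
    stGe k (restrictSt k x) (restrictSt k y) ↔ stGe k x y := by
  match x, y with
  | none, _ => exact Iff.rfl
  | some _, none => exact Iff.rfl
  | some a, some b =>
    have hr : ∀ w : Wit, ∀ i ≤ k, (if i ≤ k then w i else none) = w i := fun w i hi => if_pos hi
    exact ⟨seqGe_congr (hr a) (hr b),
      seqGe_congr (fun i hi => (hr a i hi).symm) (fun i hi => (hr b i hi).symm)⟩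

lemma finite_restrictSt_image {k M : ℕ} {S : Set St}
    (hS : ∀ w, some w ∈ S → ∀ i ≤ k, ∀ c, w i = some c → c ≤ M) :
    (restrictSt k '' S).Finite := by
  set E : Set Wit := {w | (∀ i, ∀ c, w i = some c → c ≤ M) ∧ ∀ i, k < i → w i = none}
  have hE : E.Finite := by
    have hpi : (Set.univ.pi fun _ : Fin (k + 1) =>
        (insert none (some '' Set.Iic M) : Set (Option ℕ))).Finite :=
      Set.Finite.pi fun _ => ((Set.finite_Iic M).image _).insert none
    refine Set.Finite.of_finite_image (f := fun (w : Wit) (i : Fin (k + 1)) => w i)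
      (hpi.subset ?_) ?_
    · rintro _ ⟨w, ⟨hwM, -⟩, rfl⟩ i -
      show w i ∈ insert none (some '' Set.Iic M)
      cases hwi : w i with
      | none => exact Set.mem_insert _ _
      | some c => exact Set.mem_insert_of_mem _ ⟨c, hwM i c hwi, rfl⟩
    · intro v hv w hw hvw
      funext i
      by_cases hik : i ≤ k
      · exact congrFun hvw ⟨i, Nat.lt_succ_of_le hik⟩
      · rw [hv.2 i (by omega), hw.2 i (by omega)]
  refine ((hE.image some).insert none).subset ?_
  rintro _ ⟨x, hx, rfl⟩
  match x, hx with
  | none, _ => exact Set.mem_insert _ _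
  | some w, hw =>
    refine Set.mem_insert_of_mem _ ⟨_, ⟨fun i c hc => ?_, fun i hi => if_neg (by omega)⟩, rfl⟩
    by_cases hik : i ≤ k
    · rw [if_pos hik] at hc
      exact hS w hw i hik c hc
    · rw [if_neg hik] at hc
      exact nomatch hc

lemma exists_stGe_min {k M : ℕ} {S : Set St} (hne : S.Nonempty)
    (hS : ∀ w, some w ∈ S → ∀ i ≤ k, ∀ c, w i = some c → c ≤ M) :
    ∃ x ∈ S, ∀ y ∈ S, stGe k y x := by
  -- with `⊒` read as `≤`, a maximal element is a `⊒`-minimum because `⊒` is total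
  let _ : LE St := ⟨stGe k⟩
  have _ : IsTrans St (· ≤ ·) := ⟨fun _ _ _ => stGe_trans⟩
  obtain ⟨x, hxS, hx⟩ := (finite_restrictSt_image hS).exists_maximalFor' _ _ hne
  refine ⟨x, hxS, fun y hy => ?_⟩
  rw [← stGe_restrictSt_iff]
  exact (stGe_total k _ _).elim id (hx hy)

end Minimum

section Value

lemma mem_evenIdx {k : ℕ} {b : Wit} {i : ℕ} :
    i ∈ evenIdx k b ↔ i ≤ k ∧ ∃ c, b i = some c ∧ Even c := by
  simp [evenIdx]

lemma mem_oddIdx {k : ℕ} {b : Wit} {i : ℕ} :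
    i ∈ oddIdx k b ↔ i ≤ k ∧ ∃ c, b i = some c ∧ Odd c := by
  simp [oddIdx]

lemma valw_congr {k : ℕ} {a b : Wit} (h : ∀ i ≤ k, a i = b i) : valw k a = valw k b := by
  have hev : evenIdx k a = evenIdx k b := by
    ext i
    simp only [mem_evenIdx]
    exact and_congr_right fun hi => by rw [h i hi]
  have hodd : oddIdx k a = oddIdx k b := by
    ext i
    simp only [mem_oddIdx]
    exact and_congr_right fun hi => by rw [h i hi]
  simp only [valw, evenodd, hev, hodd]

/-- `evenodd` only looks at the indices from the largest odd one upwards. -/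
lemma valw_eq_of_eqOn_of_odd {k p o : ℕ} {a b : Wit}
    (hag : ∀ i, p ≤ i → i ≤ k → a i = b i) (hpo : p ≤ o) (hok : o ≤ k)
    (hodd : ∃ c, a o = some c ∧ Odd c) : valw k a = valw k b := by
  have hoa : o ∈ oddIdx k a := mem_oddIdx.mpr ⟨hok, hodd⟩
  have hob : o ∈ oddIdx k b := mem_oddIdx.mpr ⟨hok, hag o hpo hok ▸ hodd⟩
  have hmax_le : ∀ {a b : Wit} (hag : ∀ i, p ≤ i → i ≤ k → a i = b i) (ha : o ∈ oddIdx k a)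
      (hb : (oddIdx k b).Nonempty), (oddIdx k a).max' ⟨o, ha⟩ ≤ (oddIdx k b).max' hb := by
    intro a b hag ha hb
    have hm := (oddIdx k a).max'_mem ⟨o, ha⟩
    have hom := (oddIdx k a).le_max' o ha
    rw [mem_oddIdx] at hm
    exact (oddIdx k b).le_max' _ (mem_oddIdx.mpr ⟨hm.1, hag _ (by omega) hm.1 ▸ hm.2⟩)
  have hmax : (oddIdx k a).max' ⟨o, hoa⟩ = (oddIdx k b).max' ⟨o, hob⟩ :=
    le_antisymm (hmax_le hag hoa _) (hmax_le (fun i h1 h2 => (hag i h1 h2).symm) hob _)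
  have hpm : p ≤ (oddIdx k a).max' ⟨o, hoa⟩ := hpo.trans ((oddIdx k a).le_max' o hoa)
  have hfil : (evenIdx k a).filter (fun i => (oddIdx k a).max' ⟨o, hoa⟩ < i) =
      (evenIdx k b).filter (fun i => (oddIdx k b).max' ⟨o, hob⟩ < i) := by
    ext i
    simp only [Finset.mem_filter, mem_evenIdx, ← hmax]
    constructor <;> rintro ⟨⟨hik, hc⟩, hlt⟩
    · exact ⟨⟨hik, hag i (by omega) hik ▸ hc⟩, hlt⟩
    · exact ⟨⟨hik, (hag i (by omega) hik).symm ▸ hc⟩, hlt⟩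
  unfold valw evenodd
  rw [dif_pos ⟨o, hoa⟩, dif_pos ⟨o, hob⟩, hfil, hmax]

lemma valw_le_of_eqOn_of_even {k p : ℕ} {a b : Wit}
    (hag : ∀ i, p ≤ i → i ≤ k → a i = b i) (hb : ∀ i < p, b i = none)
    (ha : ∀ i < p, ∀ c, a i = some c → Even c) : valw k b ≤ valw k a := by
  by_cases hodd : ∃ o, p ≤ o ∧ o ≤ k ∧ ∃ c, b o = some c ∧ Odd c
  · obtain ⟨o, hpo, hok, hodd⟩ := hodd
    exact (valw_eq_of_eqOn_of_odd (fun i h1 h2 => (hag i h1 h2).symm) hpo hok hodd).le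
  have hb_odd : oddIdx k b = ∅ := by
    refine Finset.eq_empty_of_forall_notMem fun i hi => ?_
    obtain ⟨hik, c, hc, hoc⟩ := mem_oddIdx.mp hi
    by_cases hip : p ≤ i
    · exact hodd ⟨i, hip, hik, c, hc, hoc⟩
    · rw [hb i (by omega)] at hc
      exact nomatch hc
  have ha_odd : oddIdx k a = ∅ := by
    refine Finset.eq_empty_of_forall_notMem fun i hi => ?_
    obtain ⟨hik, c, hc, hoc⟩ := mem_oddIdx.mp hi
    by_cases hip : p ≤ i
    · exact hodd ⟨i, hip, hik, c, hag i hip hik ▸ hc, hoc⟩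
    · exact Nat.not_odd_iff_even.mpr (ha i (by omega) c hc) hoc
  simp only [valw, evenodd, hb_odd, ha_odd, Finset.not_nonempty_empty, dite_false]
  refine Finset.sum_le_sum_of_subset fun i hi => ?_
  obtain ⟨hik, c, hc, hec⟩ := mem_evenIdx.mp hi
  have hip : p ≤ i := by
    by_contra hip
    rw [hb i (by omega)] at hc
    exact nomatch hc
  exact mem_evenIdx.mpr ⟨hik, c, (hag i hip hik).symm ▸ hc, hec⟩

end Value

structure IsConcise (k : ℕ) (b : Wit) : Prop where
  ordered : ∀ i j, j < i → i ≤ k → ∀ ci cj, b i = some ci → b j = some cj → cj ≤ ci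
  odd_unique : ∀ o, Odd o → ∀ i i', i < i' → i' ≤ k → b i = some o → b i' ≠ some o
  not_odd_zero : ∀ c, b 0 = some c → ¬ Odd c

lemma memC.isConcise {lo hi e k : ℕ} {b : Wit} (hb : memC lo hi e k b) : IsConcise k b where
  ordered := hb.2.1
  odd_unique o ho i i' hii' hi' hbi := hb.2.2.1 o ho i i' (by omega) hi' (by omega) hbi
  not_odd_zero := hb.2.2.2.1

namespace IsConcise

variable {k : ℕ} {b : Wit} {d P i c : ℕ}

lemma lt_of_lt_of_odd (hb : IsConcise k b) (hd : Odd d) (hPk : P ≤ k) (hP : b P = some d)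
    (hiP : i < P) (hc : b i = some c) : c < d :=
  lt_of_le_of_ne (hb.ordered P i hiP hPk d c hP hc)
    (by rintro rfl; exact hb.odd_unique c hd i P hiP hPk hc hP)

lemma gt_of_gt_of_odd (hb : IsConcise k b) (hd : Odd d) (hP : b P = some d)
    (hPi : P < i) (hik : i ≤ k) (hc : b i = some c) : d < c :=
  lt_of_le_of_ne (hb.ordered i P hPi hik c d hc hP)
    (by rintro rfl; exact hb.odd_unique d hd P i hPi hik hP hc)

end IsConcise

section Truncation

variable {k : ℕ} {w : Wit} {i : ℕ}

lemma trunc_of_eq_none (hw : w i = none) : trunc k w i = none := by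
  unfold trunc; rw [hw]

lemma trunc_of_dup {o i' : ℕ} (hw : w i = some o) (ho : Odd o) (hii' : i < i') (hi' : i' ≤ k)
    (hw' : w i' = some o) : trunc k w i = none := by
  unfold trunc; rw [hw]; exact if_pos ⟨ho, i', hii', hi', hw'⟩

lemma trunc_eq_self_of_forall (h : ∀ o, Odd o → ∀ i', i < i' → i' ≤ k → w i = some o →
    w i' ≠ some o) : trunc k w i = w i := by
  unfold trunc
  cases hw : w i with
  | none => rfl
  | some o => exact if_neg fun ⟨ho, i', hii', hi', hw'⟩ => h o ho i' hii' hi' hw hw'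

lemma trunc_eq_or (k : ℕ) (w : Wit) (i : ℕ) : trunc k w i = w i ∨ trunc k w i = none := by
  unfold trunc
  cases w i with
  | none => exact Or.inr rfl
  | some o => by_cases h : Odd o ∧ ∃ i', i < i' ∧ i' ≤ k ∧ w i' = some o <;> simp [h]

end Truncation

/-- The shape of `ru'(b,d)` in cases (iii) and (iv): `b` above `j`, `x` at `j`, `⊥` below. -/
def graft (b : Wit) (j : ℕ) (x : Option ℕ) : Wit :=
  fun i => if j < i then b i else if i = j then x else none

section Graft

variable {b : Wit} {j : ℕ} {x : Option ℕ} {i : ℕ}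

lemma graft_of_lt (h : j < i) : graft b j x i = b i := if_pos h

lemma graft_self : graft b j x j = x := by simp [graft]

lemma graft_of_gt (h : i < j) : graft b j x i = none := by
  simp [graft, show ¬ j < i by omega, show i ≠ j by omega]

lemma graft_eq_of_le (hx : b j = x) (hji : j ≤ i) : graft b j x i = b i := by
  rcases hji.lt_or_eq with hji | rfl
  · exact graft_of_lt hji
  · exact graft_self.trans hx.symm

lemma graft_odd_eq {d : ℕ} :
    graft b j (if j = 0 then none else some d) =
      fun i => if j < i then b i else if i = j ∧ j ≠ 0 then some d else none := by
  funext i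
  by_cases h1 : j < i
  · simp [graft, h1]
  · by_cases h2 : i = j <;> by_cases h3 : j = 0 <;> simp [graft, h1, h2, h3]

lemma trunc_graft {k : ℕ} (hb : ∀ o, Odd o → ∀ i i', i < i' → i' ≤ k → b i = some o → b i' ≠ some o)
    (hx : ∀ o, x = some o → Odd o → ∀ i', j < i' → i' ≤ k → b i' ≠ some o) (i : ℕ) :
    trunc k (graft b j x) i = graft b j x i := by
  refine trunc_eq_self_of_forall fun o ho i' hii' hi' hw hw' => ?_
  rcases lt_trichotomy j i' with hji' | rfl | hi'j
  · rw [graft_of_lt hji'] at hw'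
    rcases lt_trichotomy j i with hji | rfl | hij
    · rw [graft_of_lt hji] at hw; exact hb o ho i i' hii' hi' hw hw'
    · rw [graft_self] at hw; exact hx o hw ho i' hji' hi' hw'
    · rw [graft_of_gt hij] at hw; exact nomatch hw
  · rw [graft_of_gt hii'] at hw; exact nomatch hw
  · rw [graft_of_gt hi'j] at hw'; exact nomatch hw'

end Graft

lemma trunc_eqOn_graft {k P d : ℕ} {w b : Wit} (hd : Odd d) (hPk : P ≤ k)
    (hb : ∀ o, Odd o → ∀ i i', i < i' → i' ≤ k → b i = some o → b i' ≠ some o)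
    (hP : b P = some d) (hag : ∀ i, P ≤ i → i ≤ k → w i = b i)
    (hlow : ∀ i < P, w i = none ∨ w i = some d) :
    ∀ i ≤ k, trunc k w i = graft b P (some d) i := by
  intro i hik
  rcases lt_or_ge i P with hiP | hPi
  · rw [graft_of_gt hiP]
    rcases hlow i hiP with h | h
    · exact trunc_of_eq_none h
    · exact trunc_of_dup h hd hiP hPk ((hag P le_rfl hPk).trans hP)
  · rw [graft_eq_of_le hP hPi, ← hag i hPi hik]
    refine trunc_eq_self_of_forall fun o ho i' hii' hi' hw hw' => ?_
    rw [hag i hPi hik] at hw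
    rw [hag i' (by omega) hi'] at hw'
    exact hb o ho i i' hii' hi' hw hw'

lemma findGreatest_congr {P Q : ℕ → Prop} [DecidablePred P] [DecidablePred Q] {k : ℕ}
    (h : ∀ i ≤ k, P i ↔ Q i) : Nat.findGreatest P k = Nat.findGreatest Q k := by
  induction k with
  | zero => simp
  | succ n ih =>
    rw [Nat.findGreatest_succ, Nat.findGreatest_succ, ih fun i hi => h i (by omega)]
    simp only [h (n + 1) le_rfl]

/-- `j₀` of case (iv) of `ru'`, and `0` when it does not exist. -/
noncomputable def lastLt (b : Wit) (d k : ℕ) : ℕ :=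
  Nat.findGreatest (fun j => ∃ c, b j = some c ∧ c < d) k

/-- `j₁` of case (iv) of `ru'`, and `0` when it does not exist. -/
noncomputable def firstNotEven (b : Wit) (k : ℕ) : ℕ :=
  if h : ∃ j, j ≤ k ∧ ¬ ∃ c, b j = some c ∧ Even c then Nat.find h else 0

section LastLt

variable {k : ℕ} {b : Wit} {d : ℕ}

lemma lastLt_le : lastLt b d k ≤ k := Nat.findGreatest_le k

lemma lastLt_spec (h : ∃ i ≤ k, ∃ c, b i = some c ∧ c < d) :
    ∃ c, b (lastLt b d k) = some c ∧ c < d := by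
  obtain ⟨i, hik, hi⟩ := h
  exact Nat.findGreatest_spec (P := fun j => ∃ c, b j = some c ∧ c < d) hik hi

lemma lastLt_spec_of_pos (h : 0 < lastLt b d k) : ∃ c, b (lastLt b d k) = some c ∧ c < d := by
  obtain ⟨n, -, hnk, hn⟩ := Nat.findGreatest_pos.mp h
  exact lastLt_spec ⟨n, hnk, hn⟩

lemma not_lt_of_lastLt_lt {i : ℕ} (hi : lastLt b d k < i) (hik : i ≤ k) :
    ¬ ∃ c, b i = some c ∧ c < d :=
  Nat.findGreatest_is_greatest hi hik

lemma le_lastLt {i c : ℕ} (hik : i ≤ k) (hc : b i = some c) (hcd : c < d) : i ≤ lastLt b d k :=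
  Nat.le_findGreatest hik ⟨c, hc, hcd⟩

lemma lastLt_succ_eq :
    lastLt b (d + 1) k = Nat.findGreatest (fun j => ∃ c, b j = some c ∧ c ≤ d) k := by
  simp only [lastLt, Nat.lt_succ_iff]

lemma firstNotEven_le_of {j : ℕ} (hjk : j ≤ k) (hj : ¬ ∃ c, b j = some c ∧ Even c) :
    firstNotEven b k ≤ j := by
  rw [firstNotEven, dif_pos ⟨j, hjk, hj⟩]
  exact Nat.find_min' _ ⟨hjk, hj⟩

end LastLt

section Branches

variable {k hi : ℕ} {b : Wit} {d : ℕ}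

lemma ruC_of_eq_hi (hd : Odd d) (hdhi : d = hi) : ruC k hi b d = fun _ => none := by
  unfold ruC; rw [if_pos ⟨hd, hdhi⟩]

lemma ruP_of_eq_hi (hd : Odd d) (hdhi : d = hi) : ruP k hi b d = fun _ => none := by
  unfold ruP; rw [if_pos ⟨hd, hdhi⟩]

lemma ruC_of_odd_of_not_exists_lt (hd : Odd d) (hdhi : d ≠ hi)
    (h : ¬ ∃ i ≤ k, ∃ c, b i = some c ∧ c < d) : ruC k hi b d = b := by
  unfold ruC
  refine if_neg (fun h' => hdhi h'.2) |>.trans (if_pos (Or.inl ⟨hd, fun i hik => ?_⟩))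
  cases hbi : b i with
  | none => exact Or.inl rfl
  | some c => exact Or.inr ⟨c, rfl, Nat.le_of_not_lt fun hcd => h ⟨i, hik, c, hbi, hcd⟩⟩

lemma ruC_of_odd_of_exists_lt (hd : Odd d) (hdhi : d ≠ hi)
    (h : ∃ i ≤ k, ∃ c, b i = some c ∧ c < d) :
    ruC k hi b d = graft b (lastLt b d k) (if lastLt b d k = 0 then none else some d) := by
  obtain ⟨i, hik, c, hc, hcd⟩ := h
  unfold ruC
  rw [if_neg fun h' => hdhi h'.2, if_neg, if_pos hd]
  · exact graft_odd_eq.symm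
  · rintro (⟨-, hall⟩ | ⟨hev, -⟩)
    · rcases hall i hik with h' | ⟨c', hc', hdc'⟩ <;> simp_all
      omega
    · exact Nat.not_odd_iff_even.mpr hev hd

lemma ruP_of_odd_of_not_exists_le (hd : Odd d) (hdhi : d ≠ hi)
    (h : ¬ ∃ i ≤ k, ∃ c, b i = some c ∧ c ≤ d) :
    ruP k hi b d = b := by
  unfold ruP
  refine if_neg (fun h' => hdhi h'.2) |>.trans (if_pos ⟨hd, fun i hik => ?_⟩)
  cases hbi : b i with
  | none => exact Or.inl rfl
  | some c => exact Or.inr ⟨c, rfl, Nat.lt_of_not_le fun hcd => h ⟨i, hik, c, hbi, hcd⟩⟩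

lemma ruP_of_odd_of_exists_le (hd : Odd d) (hdhi : d ≠ hi)
    (h : ∃ i ≤ k, ∃ c, b i = some c ∧ c ≤ d) :
    ruP k hi b d =
      graft b (lastLt b (d + 1) k) (if lastLt b (d + 1) k = 0 then none else some d) := by
  obtain ⟨i, hik, c, hc, hcd⟩ := h
  unfold ruP
  rw [if_neg fun h' => hdhi h'.2, if_neg, if_pos hd, graft_odd_eq, lastLt_succ_eq]
  rintro ⟨-, hall⟩
  rcases hall i hik with h' | ⟨c', hc', hdc'⟩ <;> simp_all
  omega

lemma ruC_of_even_of_forall (hev : Even d) (h : ∀ i ≤ k, ∃ c, b i = some c ∧ Even c ∧ d ≤ c) :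
    ruC k hi b d = b := by
  have hd : ¬ Odd d := Nat.not_odd_iff_even.mpr hev
  unfold ruC
  exact if_neg (fun h' => hd h'.1) |>.trans (if_pos (Or.inr ⟨hev, h⟩))

lemma ruC_of_even (hev : Even d) (h : ¬ ∀ i ≤ k, ∃ c, b i = some c ∧ Even c ∧ d ≤ c) :
    ruC k hi b d = graft b (max (lastLt b d k) (firstNotEven b k)) (some d) := by
  have hd : ¬ Odd d := Nat.not_odd_iff_even.mpr hev
  unfold ruC
  rw [if_neg fun h' => hd h'.1, if_neg, if_neg hd]
  · rfl
  · rintro (⟨hd', -⟩ | ⟨-, h'⟩)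
    · exact hd hd'
    · exact h h'

lemma ruP_of_even_of_exists_odd_lt (hev : Even d) (h : ∃ i ≤ k, ∃ c, b i = some c ∧ Odd c ∧ c < d) :
    ruP k hi b d = fun i =>
      if Nat.findGreatest (fun j => ∃ c, b j = some c ∧ Odd c ∧ c < d) k ≤ i
      then (if ∃ c, b i = some c ∧ c < d then some d else b i)
      else if i = 0 then some d else none := by
  have hd : ¬ Odd d := Nat.not_odd_iff_even.mpr hev
  unfold ruP
  rw [if_neg fun h' => hd h'.1, if_neg fun h' => hd h'.1, if_neg hd, if_pos h]

lemma ruP_of_even_of_exists_not_even (hev : Even d)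
    (h : ¬ ∃ i ≤ k, ∃ c, b i = some c ∧ Odd c ∧ c < d)
    (hne : ∃ i, i ≤ k ∧ ¬ ∃ c, b i = some c ∧ Even c) :
    ruP k hi b d = fun i =>
      if firstNotEven b k < i then (if ∃ c, b i = some c ∧ c ≤ d then some d else b i)
      else if i = firstNotEven b k then some d else none := by
  have hd : ¬ Odd d := Nat.not_odd_iff_even.mpr hev
  unfold ruP
  rw [if_neg fun h' => hd h'.1, if_neg fun h' => hd h'.1, if_neg hd, if_neg h, dif_pos hne,
    firstNotEven, dif_pos hne]

lemma ruP_of_even_of_forall_even (hev : Even d)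
    (h : ¬ ∃ i ≤ k, ∃ c, b i = some c ∧ Odd c ∧ c < d)
    (hall : ∀ i ≤ k, ∃ c, b i = some c ∧ Even c) :
    ruP k hi b d = fun i => if ∃ c, b i = some c ∧ c ≤ d then some d else b i := by
  have hd : ¬ Odd d := Nat.not_odd_iff_even.mpr hev
  unfold ruP
  rw [if_neg fun h' => hd h'.1, if_neg fun h' => hd h'.1, if_neg hd, if_neg h,
    dif_neg fun ⟨i, hik, hi⟩ => hi (hall i hik)]

end Branches

section OddColour

variable {k hi : ℕ} {b : Wit} {d : ℕ}

lemma ruP_eq_ruC_of_odd_of_not_mem (hd : Odd d) (hdhi : d ≠ hi) (hno : ∀ i ≤ k, b i ≠ some d) :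
    ruP k hi b d = ruC k hi b d := by
  have hiff : ∀ i ≤ k, (∃ c, b i = some c ∧ c ≤ d) ↔ (∃ c, b i = some c ∧ c < d) :=
    fun i hik => ⟨fun ⟨c, hc, hcd⟩ => ⟨c, hc, hcd.lt_of_ne (by rintro rfl; exact hno i hik hc)⟩,
      fun ⟨c, hc, hcd⟩ => ⟨c, hc, hcd.le⟩⟩
  by_cases hlt : ∃ i ≤ k, ∃ c, b i = some c ∧ c < d
  · obtain ⟨i, hik, hi⟩ := hlt
    rw [ruC_of_odd_of_exists_lt hd hdhi ⟨i, hik, hi⟩,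
      ruP_of_odd_of_exists_le hd hdhi ⟨i, hik, (hiff i hik).mpr hi⟩, lastLt_succ_eq, lastLt,
      findGreatest_congr hiff]
  · rw [ruC_of_odd_of_not_exists_lt hd hdhi hlt,
      ruP_of_odd_of_not_exists_le hd hdhi fun ⟨i, hik, hi⟩ => hlt ⟨i, hik, (hiff i hik).mp hi⟩]

lemma trunc_ruC_of_odd_of_not_mem (hb : IsConcise k b) (hd : Odd d) (hdhi : d ≠ hi)
    (hno : ∀ i ≤ k, b i ≠ some d) (i : ℕ) : trunc k (ruC k hi b d) i = ruC k hi b d i := by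
  by_cases hlt : ∃ i ≤ k, ∃ c, b i = some c ∧ c < d
  · rw [ruC_of_odd_of_exists_lt hd hdhi hlt]
    refine trunc_graft hb.odd_unique (fun o hx _ i' _ hi' => ?_) i
    split_ifs at hx
    exact Option.some_injective _ hx ▸ hno i' hi'
  · rw [ruC_of_odd_of_not_exists_lt hd hdhi hlt]
    exact trunc_eq_self_of_forall fun o ho i' hii' hi' hw => hb.odd_unique o ho i i' hii' hi' hw

lemma ruP_of_odd_of_mem (hb : IsConcise k b) (hd : Odd d) (hdhi : d ≠ hi) {P : ℕ} (hPk : P ≤ k)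
    (hP : b P = some d) : ruP k hi b d = graft b P (some d) := by
  have hP0 : P ≠ 0 := by rintro rfl; exact hb.not_odd_zero d hP hd
  have hlast : lastLt b (d + 1) k = P := by
    rw [lastLt, Nat.findGreatest_eq_iff]
    refine ⟨hPk, fun _ => ⟨d, hP, by omega⟩, fun i hPi hik ⟨c, hc, hcd⟩ => ?_⟩
    have := hb.gt_of_gt_of_odd hd hP hPi hik hc
    omega
  rw [ruP_of_odd_of_exists_le hd hdhi ⟨P, hPk, d, hP, le_rfl⟩, hlast, if_neg hP0]

lemma ruC_of_odd_of_mem (hb : IsConcise k b) (hd : Odd d) (hdhi : d ≠ hi) {P : ℕ} (hPk : P ≤ k)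
    (hP : b P = some d) :
    (∀ i, P ≤ i → i ≤ k → ruC k hi b d i = b i) ∧
      ∀ i < P, ruC k hi b d i = none ∨ ruC k hi b d i = some d := by
  by_cases hlt : ∃ i ≤ k, ∃ c, b i = some c ∧ c < d
  · obtain ⟨q, hq, hqd⟩ := lastLt_spec hlt
    have hQP : lastLt b d k < P := by
      by_contra hPQ
      rcases (not_lt.mp hPQ).lt_or_eq with hPQ | hPQ
      · have := hb.gt_of_gt_of_odd hd hP hPQ lastLt_le hq
        omega
      · rw [← hPQ, hP] at hq
        cases hq
        omega
    rw [ruC_of_odd_of_exists_lt hd hdhi hlt]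
    refine ⟨fun i hPi _ => graft_of_lt (by omega), fun i hiP => ?_⟩
    rcases lt_trichotomy (lastLt b d k) i with hQi | rfl | hiQ
    · rw [graft_of_lt hQi]
      cases hbi : b i with
      | none => exact Or.inl rfl
      | some c =>
        exact absurd ⟨c, hbi, hb.lt_of_lt_of_odd hd hPk hP hiP hbi⟩
          (not_lt_of_lastLt_lt hQi (by omega))
    · rw [graft_self]
      split_ifs <;> simp
    · exact Or.inl (graft_of_gt hiQ)
  · rw [ruC_of_odd_of_not_exists_lt hd hdhi hlt]
    refine ⟨fun _ _ _ => rfl, fun i hiP => Or.inl ?_⟩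
    cases hbi : b i with
    | none => rfl
    | some c => exact absurd ⟨i, by omega, c, hbi, hb.lt_of_lt_of_odd hd hPk hP hiP hbi⟩ hlt

lemma trunc_ruC_eqOn_ruP_of_odd (hb : IsConcise k b) (hd : Odd d) :
    (∀ i ≤ k, trunc k (ruC k hi b d) i = ruP k hi b d i) ∧
      valw k (ruC k hi b d) = valw k (ruP k hi b d) := by
  by_cases hdhi : d = hi
  · rw [ruC_of_eq_hi hd hdhi, ruP_of_eq_hi hd hdhi]
    exact ⟨fun i _ => trunc_of_eq_none rfl, rfl⟩
  by_cases hmem : ∃ P ≤ k, b P = some d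
  · obtain ⟨P, hPk, hP⟩ := hmem
    obtain ⟨hag, hlow⟩ := ruC_of_odd_of_mem hb hd hdhi hPk hP
    rw [ruP_of_odd_of_mem hb hd hdhi hPk hP]
    refine ⟨trunc_eqOn_graft hd hPk hb.odd_unique hP hag hlow, ?_⟩
    rw [valw_eq_of_eqOn_of_odd hag le_rfl hPk ⟨d, (hag P le_rfl hPk).trans hP, hd⟩,
      valw_eq_of_eqOn_of_odd (fun i hPi _ => (graft_eq_of_le hP hPi).symm) le_rfl hPk
        ⟨d, hP, hd⟩]
  · push Not at hmem
    rw [ruP_eq_ruC_of_odd_of_not_mem hd hdhi hmem]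
    exact ⟨fun i _ => trunc_ruC_of_odd_of_not_mem hb hd hdhi hmem i, rfl⟩

end OddColour

def IsEvenFilling (k : ℕ) (a b : Wit) (p d : ℕ) : Prop :=
  (∀ i, p ≤ i → i ≤ k → a i = graft b p (some d) i) ∧ ∀ i < p, ∀ c, a i = some c → Even c

lemma IsEvenFilling.seqGe_and_valw_le {k p d : ℕ} {a b : Wit} (h : IsEvenFilling k a b p d) :
    seqGe k a (graft b p (some d)) ∧ valw k (graft b p (some d)) ≤ valw k a :=
  ⟨seqGe_of_eqOn_of_eq_none h.1 fun _ hi => graft_of_gt hi,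
    valw_le_of_eqOn_of_even h.1 (fun _ hi => graft_of_gt hi) h.2⟩

section EvenColour

variable {k hi : ℕ} {b : Wit} {d : ℕ}

lemma ite_le_eq_of_not_lt {i : ℕ} (h : ¬ ∃ c, b i = some c ∧ c < d) :
    (if ∃ c, b i = some c ∧ c ≤ d then some d else b i) = b i := by
  split_ifs with hle
  · obtain ⟨c, hc, hcd⟩ := hle
    rw [hc, show c = d by by_contra hne; exact h ⟨c, hc, by omega⟩]
  · rfl

lemma isEvenFilling_ruP_of_exists_odd_lt (hb : IsConcise k b) (hev : Even d)
    (h : ∃ i ≤ k, ∃ c, b i = some c ∧ Odd c ∧ c < d) :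
    IsEvenFilling k (ruP k hi b d) b (max (lastLt b d k) (firstNotEven b k)) d := by
  rw [ruP_of_even_of_exists_odd_lt hev h]
  set R := Nat.findGreatest (fun j => ∃ c, b j = some c ∧ Odd c ∧ c < d) k
  obtain ⟨r, hr, hor, hrd⟩ : ∃ c, b R = some c ∧ Odd c ∧ c < d := by
    obtain ⟨i, hik, hi⟩ := h
    exact Nat.findGreatest_spec (P := fun j => ∃ c, b j = some c ∧ Odd c ∧ c < d) hik hi
  have hRk : R ≤ k := Nat.findGreatest_le k
  have hRQ : R ≤ lastLt b d k := le_lastLt hRk hr hrd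
  have hJR : firstNotEven b k ≤ R := firstNotEven_le_of hRk fun ⟨c, hc, hec⟩ =>
    Nat.not_odd_iff_even.mpr hec (Option.some_injective _ (hr.symm.trans hc) ▸ hor)
  obtain ⟨q, hq, hqd⟩ := lastLt_spec ⟨R, hRk, r, hr, hrd⟩
  rw [max_eq_left (hJR.trans hRQ)]
  refine ⟨fun i hQi hik => ?_, fun i hiQ c hc => ?_⟩
  · dsimp only
    rcases hQi.lt_or_eq with hQi | rfl
    · rw [graft_of_lt hQi, if_pos (hRQ.trans hQi.le), if_neg (not_lt_of_lastLt_lt hQi hik)]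
    · rw [graft_self, if_pos hRQ, if_pos ⟨q, hq, hqd⟩]
  · dsimp only at hc
    split_ifs at hc with h1 h2
    · cases hc; exact hev
    · exact absurd ⟨c, hc, (hb.ordered _ i hiQ lastLt_le q c hq hc).trans_lt hqd⟩ h2
    · cases hc; exact hev

lemma isEvenFilling_ruP_of_exists_not_even (hb : IsConcise k b) (hev : Even d)
    (h : ¬ ∃ i ≤ k, ∃ c, b i = some c ∧ Odd c ∧ c < d)
    (hne : ∃ i, i ≤ k ∧ ¬ ∃ c, b i = some c ∧ Even c) :
    IsEvenFilling k (ruP k hi b d) b (max (lastLt b d k) (firstNotEven b k)) d := by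
  rw [ruP_of_even_of_exists_not_even hev h hne]
  refine ⟨fun i hpi hik => ?_, fun i hip c hc => ?_⟩
  · dsimp only
    rcases hpi.lt_or_eq with hpi | rfl
    · rw [graft_of_lt hpi, if_pos (by omega),
        ite_le_eq_of_not_lt (not_lt_of_lastLt_lt (by omega) hik)]
    · rw [graft_self]
      rcases le_or_gt (lastLt b d k) (firstNotEven b k) with hQJ | hJQ
      · rw [max_eq_right hQJ, if_neg (lt_irrefl _), if_pos rfl]
      · obtain ⟨q, hq, hqd⟩ := lastLt_spec_of_pos (b := b) (d := d) (k := k) (by omega)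
        rw [max_eq_left hJQ.le, if_pos hJQ, if_pos ⟨q, hq, hqd.le⟩]
  · dsimp only at hc
    split_ifs at hc with h1 h2 h3
    · cases hc; exact hev
    · obtain ⟨q, hq, hqd⟩ := lastLt_spec_of_pos (b := b) (d := d) (k := k) (by omega)
      exact absurd ⟨c, hc, (hb.ordered _ i (by omega) lastLt_le q c hq hc).trans hqd.le⟩ h2
    · cases hc; exact hev

lemma isEvenFilling_ruP_of_forall_even (hev : Even d)
    (hnot : ¬ ∀ i ≤ k, ∃ c, b i = some c ∧ Even c ∧ d ≤ c)
    (hall : ∀ i ≤ k, ∃ c, b i = some c ∧ Even c) :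
    IsEvenFilling k (ruP k hi b d) b (max (lastLt b d k) (firstNotEven b k)) d := by
  have h : ¬ ∃ i ≤ k, ∃ c, b i = some c ∧ Odd c ∧ c < d := fun ⟨i, hik, c, hc, hoc, _⟩ => by
    obtain ⟨c', hc', hec'⟩ := hall i hik
    exact Nat.not_odd_iff_even.mpr (Option.some_injective _ (hc'.symm.trans hc) ▸ hec') hoc
  have hJ : firstNotEven b k = 0 := dif_neg fun ⟨i, hik, hi⟩ => hi (hall i hik)
  obtain ⟨q, hq, hqd⟩ : ∃ c, b (lastLt b d k) = some c ∧ c < d := by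
    push Not at hnot
    obtain ⟨i, hik, hi⟩ := hnot
    obtain ⟨c, hc, hec⟩ := hall i hik
    exact lastLt_spec ⟨i, hik, c, hc, hi c hc hec⟩
  rw [hJ, max_eq_left (Nat.zero_le _), ruP_of_even_of_forall_even hev h hall]
  refine ⟨fun i hQi hik => ?_, fun i hiQ c hc => ?_⟩
  · dsimp only
    rcases hQi.lt_or_eq with hQi | rfl
    · rw [graft_of_lt hQi, ite_le_eq_of_not_lt (not_lt_of_lastLt_lt hQi hik)]
    · rw [graft_self, if_pos ⟨q, hq, hqd.le⟩]
  · dsimp only at hc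
    split_ifs at hc
    · cases hc; exact hev
    · obtain ⟨c', hc', hec'⟩ := hall i (hiQ.le.trans lastLt_le)
      exact Option.some_injective _ (hc'.symm.trans hc) ▸ hec'

lemma seqGe_ruP_trunc_ruC_of_even (hb : IsConcise k b) (hev : Even d) :
    seqGe k (ruP k hi b d) (trunc k (ruC k hi b d)) ∧
      valw k (ruC k hi b d) ≤ valw k (ruP k hi b d) := by
  have htrunc : ∀ i, trunc k b i = b i := fun i =>
    trunc_eq_self_of_forall fun o ho i' hii' hi' hw => hb.odd_unique o ho i i' hii' hi' hw
  by_cases hall : ∀ i ≤ k, ∃ c, b i = some c ∧ Even c ∧ d ≤ c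
  · have hP : ∀ i ≤ k, ruP k hi b d i = b i := by
      intro i hik
      rw [ruP_of_even_of_forall_even hev ?_ fun i hik => (hall i hik).imp fun c h => ⟨h.1, h.2.1⟩]
      · obtain ⟨c, hc, -, hdc⟩ := hall i hik
        exact ite_le_eq_of_not_lt fun ⟨c', hc', hcd⟩ => by
          rw [hc] at hc'; cases hc'; omega
      · rintro ⟨i, hik, c, hc, hoc, -⟩
        obtain ⟨c', hc', hec', -⟩ := hall i hik
        exact Nat.not_odd_iff_even.mpr (Option.some_injective _ (hc'.symm.trans hc) ▸ hec') hoc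
    rw [ruC_of_even_of_forall hev hall]
    exact ⟨seqGe_of_eqOn fun i hik => (hP i hik).trans (htrunc i).symm, (valw_congr hP).ge⟩
  have hfill : IsEvenFilling k (ruP k hi b d) b (max (lastLt b d k) (firstNotEven b k)) d := by
    by_cases hodd : ∃ i ≤ k, ∃ c, b i = some c ∧ Odd c ∧ c < d
    · exact isEvenFilling_ruP_of_exists_odd_lt hb hev hodd
    by_cases hne : ∃ i, i ≤ k ∧ ¬ ∃ c, b i = some c ∧ Even c
    · exact isEvenFilling_ruP_of_exists_not_even hb hev hodd hne
    · push Not at hne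
      exact isEvenFilling_ruP_of_forall_even hev hall hne
  have hx : ∀ o, some d = some o → Odd o → ∀ i', max (lastLt b d k) (firstNotEven b k) < i' →
      i' ≤ k → b i' ≠ some o := fun o hdo ho =>
    absurd (Option.some_injective _ hdo ▸ hev) (Nat.not_even_iff_odd.mpr ho)
  rw [ruC_of_even hev hall, funext (trunc_graft hb.odd_unique hx)]
  exact hfill.seqGe_and_valw_le

end EvenColour

section Antagonistic

variable {lo hi e k : ℕ}

lemma stGe_upP_upC {b : Wit} (hb : IsConcise k b) (d : ℕ) :
    stGe k (upP k hi e (some b) d) (upC k hi e (some b) d) := by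
  obtain ⟨hseq, hval⟩ : seqGe k (ruP k hi b d) (trunc k (ruC k hi b d)) ∧
      valw k (ruC k hi b d) ≤ valw k (ruP k hi b d) := by
    rcases Nat.even_or_odd d with hev | hd
    · exact seqGe_ruP_trunc_ruC_of_even hb hev
    · obtain ⟨heq, hval⟩ := trunc_ruC_eqOn_ruP_of_odd hb hd
      exact ⟨seqGe_of_eqOn fun i hik => (heq i hik).symm, hval.le⟩
  simp only [upP, upC]
  split_ifs with hP hC
  · exact hseq
  · exact absurd (hval.trans hP) hC
  all_goals trivial

lemma ruC_eq_or (b : Wit) (d i : ℕ) :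
    ruC k hi b d i = b i ∨ ruC k hi b d i = some d ∨ ruC k hi b d i = none := by
  unfold ruC
  split_ifs
  · exact Or.inr (Or.inr rfl)
  · exact Or.inl rfl
  all_goals dsimp only; split_ifs <;> simp

lemma le_of_upC_eq_some {c : St} (hc : memCW lo hi e k c) {d : ℕ} (hd : d ≤ hi) {w : Wit}
    (hw : upC k hi e c d = some w) {i x : ℕ} (hik : i ≤ k) (hx : w i = some x) : x ≤ hi := by
  obtain rfl | ⟨v, rfl, hv⟩ := hc
  · exact nomatch hw
  have hw : trunc k (ruC k hi v d) = w := by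
    simp only [upC] at hw
    split_ifs at hw
    exact Option.some_injective _ hw
  rw [← hw] at hx
  rcases trunc_eq_or k (ruC k hi v d) i with ht | ht <;> rw [ht] at hx
  · rcases ruC_eq_or v d i with hr | hr | hr <;> rw [hr] at hx
    · rcases hv.1 i hik with hvi | ⟨x', hvi, hx'⟩ <;> rw [hvi] at hx <;> cases hx
      exact hx'.2.1
    · cases hx; exact hd
    · cases hx
  · cases hx

lemma exists_upC_min {b : Wit} (hb : memC lo hi e k b) {d : ℕ} (hd : d ≤ hi) :
    ∃ x : St, (∃ c : St, memCW lo hi e k c ∧ stGe k c (some b) ∧ upC k hi e c d = x) ∧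
      ∀ y : St, (∃ c : St, memCW lo hi e k c ∧ stGe k c (some b) ∧ upC k hi e c d = y) →
        stGe k y x :=
  exists_stGe_min ⟨_, some b, Or.inr ⟨b, rfl, hb⟩, stGe_refl k _, rfl⟩
    fun _ ⟨_, hc, _, hw⟩ _ hik _ hx => le_of_upC_eq_some hc hd hw hik hx

lemma antag_eq_none_or (f : St → ℕ → St) (b : Wit) (d : ℕ) :
    antag lo hi e k f (some b) d = none ∨ ∃ c : St, memCW lo hi e k c ∧ stGe k c (some b) ∧
      f c d = antag lo hi e k f (some b) d := by
  simp only [antag]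
  split_ifs with h
  · exact Or.inr h.choose_spec.1
  · exact Or.inl rfl

lemma stGe_antag {f : St → ℕ → St} {b : Wit} {d : ℕ}
    (h : ∃ x : St, (∃ c : St, memCW lo hi e k c ∧ stGe k c (some b) ∧ f c d = x) ∧
      ∀ y : St, (∃ c : St, memCW lo hi e k c ∧ stGe k c (some b) ∧ f c d = y) → stGe k y x)
    ⦃c : St⦄ (hc : memCW lo hi e k c) (hcb : stGe k c (some b)) :
    stGe k (f c d) (antag lo hi e k f (some b) d) := by
  simp only [antag, dif_pos h]
  exact h.choose_spec.2 _ ⟨c, hc, hcb, rfl⟩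

end Antagonistic

theorem auP_ge_auC_general (lo hi e : ℕ)
    (b : Wit) (hb : memC lo hi e (Nat.log 2 e) b)
    (d : ℕ) (hd : d ∈ Set.Icc lo hi) :
    stGe (Nat.log 2 e) (auP lo hi e (Nat.log 2 e) (some b) d)
      (auC lo hi e (Nat.log 2 e) (some b) d) := by
  have hC := stGe_antag (exists_upC_min hb hd.2)
  rcases antag_eq_none_or (upP (Nat.log 2 e) hi e) b d with h | ⟨c, hc, hcb, h⟩
  · rw [auP, h]; trivial
  rw [auP, ← h]
  refine stGe_trans ?_ (hC hc hcb)
  obtain rfl | ⟨w, rfl, hw⟩ := hc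
  · trivial
  · exact stGe_upP_upC hw.isConcise d

/-- For every `b ∈ ℂ` and every colour `d ∈ C`: `au₊(b,d) ⊒ au(b,d)`, where `k = ⌊log₂ e⌋`. -/
theorem auP_ge_auC (lo hi e : ℕ) (hlo : lo = 1 ∨ lo = 2) (hlohi : lo ≤ hi) (he : 1 ≤ e)
    (b : Wit) (hb : memC lo hi e (Nat.log 2 e) b)
    (d : ℕ) (hd : d ∈ Set.Icc lo hi) :
    stGe (Nat.log 2 e) (auP lo hi e (Nat.log 2 e) (some b) d)
      (auC lo hi e (Nat.log 2 e) (some b) d) :=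
  auP_ge_auC_general lo hi e b hb d hd
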